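/- For all nonnegative integers m, n and complex z₁, z₂, q with q ≠ 0: z₁^m z₂^n = q^{-mn} Σ_{k=0}^{min(m,n)} [m choose k]_q [n choose k]_q (q;q)_k q^{k(k-1)/2} h_{m-k,n-k}(z₁, z₂ | q). -/

import Mathlib

open Finset Filter

noncomputable def qPoch (a q : ℂ) (n : ℕ) : ℂ :=
  ∏ j ∈ Finset.range n, (1 - a * q ^ j)

noncomputable def qbinom (q : ℂ) : ℕ → ℕ → ℂ
  | _, 0 => 1
  | 0, _ + 1 => 0
  | m + 1, k + 1 => qbinom q m k + q ^ (k + 1) * qbinom q m (k + 1)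

/-- The first q-analogue of the 2D Hermite polynomials. -/
noncomputable def H2D (q z1 z2 : ℂ) (m n : ℕ) : ℂ :=
  ∑ k ∈ Finset.range (min m n + 1),
    qbinom q m k * qbinom q n k * (-1) ^ k * q ^ (k.choose 2) * qPoch q q k *
      z1 ^ (m - k) * z2 ^ (n - k)

/-- The second q-analogue of the 2D Hermite polynomials. -/
noncomputable def h2D (q z1 z2 : ℂ) (m n : ℕ) : ℂ :=
  ∑ j ∈ Finset.range (min m n + 1),
    qbinom q m j * qbinom q n j * q ^ ((m - j) * (n - j)) * (-1) ^ j * qPoch q q j *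
      z1 ^ (m - j) * z2 ^ (n - j)

/-- The q-2D ultraspherical (q-disk / q-Zernike) polynomials. -/
noncomputable def p2D (q b z1 z2 : ℂ) (m n : ℕ) : ℂ :=
  ∑ k ∈ Finset.range (min m n + 1),
    qbinom q m k * qbinom q n k * (-1) ^ k * q ^ (k.choose 2) * qPoch q q k *
      qPoch (b * q) q (m + n - k) * z1 ^ (m - k) * z2 ^ (n - k)

/-- The infinite q-Pochhammer product (a;q)_∞. -/
noncomputable def qPochInf (a q : ℂ) : ℂ :=
  ∏' j : ℕ, (1 - a * q ^ j)


/-!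
Expanding each `h2D` and collecting the terms by `s = k + j`, the identities
`[m,k][m-k,s-k] = [m,s][s,k]` and `[s,k] (q;q)_k (q;q)_{s-k} = (q;q)_s` factor the coefficient
of the `s`-th group as the `s`-th summand of `h2D q z1 z2 m n` times
`∑ₖ [s,k] q^(k choose 2) (-1)^k`. By the q-binomial theorem that sum is `(1;q)_s`, which vanishes
for `s > 0`, so only `s = 0` survives and contributes `q^(mn) z1^m z2^n`.
-/

variable (q : ℂ)

@[simp]
lemma qbinom_zero_right (m : ℕ) : qbinom q m 0 = 1 := by
  cases m <;> rfl

lemma qbinom_succ_succ (m k : ℕ) :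
    qbinom q (m + 1) (k + 1) = qbinom q m k + q ^ (k + 1) * qbinom q m (k + 1) := rfl

lemma qbinom_of_lt {m k : ℕ} (h : m < k) : qbinom q m k = 0 := by
  induction m generalizing k with
  | zero => obtain ⟨k, rfl⟩ := Nat.exists_eq_succ_of_ne_zero h.ne'; rfl
  | succ m ih =>
    obtain ⟨k, rfl⟩ := Nat.exists_eq_succ_of_ne_zero (Nat.ne_zero_of_lt h)
    rw [qbinom_succ_succ, ih (by omega), ih (by omega), mul_zero, add_zero]

@[simp]
lemma qbinom_self (k : ℕ) : qbinom q k k = 1 := by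
  induction k with
  | zero => rfl
  | succ k ih => rw [qbinom_succ_succ, ih, qbinom_of_lt q k.lt_succ_self, mul_zero, add_zero]

lemma qPoch_succ (a : ℂ) (n : ℕ) : qPoch a q (n + 1) = qPoch a q n * (1 - a * q ^ n) :=
  prod_range_succ _ n

lemma qPoch_succ' (a : ℂ) (n : ℕ) : qPoch a q (n + 1) = (1 - a) * qPoch (a * q) q n := by
  simp only [qPoch, prod_range_succ', pow_zero, mul_one, pow_succ', mul_assoc, mul_left_comm a q,
    mul_comm _ (1 - a)]

lemma qPoch_one_eq_zero {n : ℕ} (hn : n ≠ 0) : qPoch 1 q n = 0 :=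
  prod_eq_zero (i := 0) (mem_range.2 (Nat.pos_of_ne_zero hn)) (by simp)

lemma qbinom_mul_qPoch_mul_qPoch {m k : ℕ} (hk : k ≤ m) :
    qbinom q m k * qPoch q q k * qPoch q q (m - k) = qPoch q q m := by
  induction m generalizing k with
  | zero => simp [Nat.le_zero.1 hk, qPoch]
  | succ m ih =>
    rcases k with _ | k
    · simp [qPoch]
    rcases (Nat.succ_le_succ_iff.1 hk).lt_or_eq with h | rfl
    · obtain ⟨j, rfl⟩ := Nat.exists_eq_add_of_lt h
      have hk := ih (k := k) (by omega)
      have hk1 := ih (k := k + 1) (by omega)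
      rw [show k + j + 1 - k = j + 1 by omega, qPoch_succ q q j] at hk
      rw [show k + j + 1 - (k + 1) = j by omega, qPoch_succ q q k] at hk1
      rw [show k + j + 1 + 1 - (k + 1) = j + 1 by omega, qbinom_succ_succ, qPoch_succ q q k,
        qPoch_succ q q j, qPoch_succ q q (k + j + 1)]
      linear_combination (1 - q * q ^ k) * hk + q ^ (k + 1) * (1 - q * q ^ j) * hk1
    · simp [qPoch]

-- Rothe's q-binomial theorem.
theorem sum_qbinom_mul_pow_choose_mul_neg_pow (s : ℕ) (x : ℂ) :
    ∑ k ∈ range (s + 1), qbinom q s k * q ^ k.choose 2 * (-x) ^ k = qPoch x q s := by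
  induction s generalizing x with
  | zero => simp [qPoch]
  | succ s ih =>
    set g : ℕ → ℂ := fun k => qbinom q s k * q ^ k.choose 2 * (-(q * x)) ^ k
    have hterm (k : ℕ) : qbinom q (s + 1) (k + 1) * q ^ (k + 1).choose 2 * (-x) ^ (k + 1) =
        -x * g k + g (k + 1) := by
      simp only [g, qbinom_succ_succ, Nat.choose_succ_succ', Nat.choose_one_right]
      ring
    have hshift : ∑ k ∈ range (s + 1), g (k + 1) = qPoch (q * x) q s - 1 := by
      rw [← ih, ← add_sub_cancel_right (∑ k ∈ range (s + 1), g (k + 1)) (g 0),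
        ← sum_range_succ', sum_range_succ, show g (s + 1) = 0 by simp [g, qbinom_of_lt]]
      simp [g]
    rw [sum_range_succ', sum_congr rfl fun k _ => hterm k, sum_add_distrib, ← mul_sum, ih,
      hshift, qPoch_succ', mul_comm x q]
    simp only [qbinom_zero_right, Nat.choose_zero_succ, pow_zero, mul_one]
    ring

lemma sum_qbinom_mul_pow_choose_mul_neg_one_pow (s : ℕ) :
    ∑ k ∈ range (s + 1), qbinom q s k * q ^ k.choose 2 * (-1) ^ k = if s = 0 then 1 else 0 := by
  rw [sum_qbinom_mul_pow_choose_mul_neg_pow]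
  split_ifs with hs
  · simp [hs, qPoch]
  · exact qPoch_one_eq_zero q hs

lemma qbinom_add_mul_qbinom (m k j : ℕ) :
    qbinom q m (k + j) * qbinom q (k + j) k = qbinom q m k * qbinom q (m - k) j := by
  induction m generalizing k j with
  | zero => rcases k with _ | k <;> simp [qbinom_of_lt]
  | succ m ih =>
    rcases k with _ | k
    · simp
    rcases j with _ | j
    · simp
    rcases lt_or_ge k m with h | h
    · obtain ⟨i, rfl⟩ := Nat.exists_eq_add_of_lt h
      have h1 := ih k (j + 1)
      have h2 := ih (k + 1) j
      have h3 := ih (k + 1) (j + 1)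
      rw [show k + (j + 1) = k + j + 1 by omega, show k + i + 1 - k = i + 1 by omega,
        qbinom_succ_succ q i j] at h1
      rw [show k + 1 + j = k + j + 1 by omega, show k + i + 1 - (k + 1) = i by omega] at h2
      rw [show k + 1 + (j + 1) = k + j + 1 + 1 by omega,
        show k + i + 1 - (k + 1) = i by omega] at h3
      rw [show k + i + 1 + 1 - (k + 1) = i + 1 by omega, qbinom_succ_succ q i j,
        show k + 1 + (j + 1) = k + j + 1 + 1 by omega, qbinom_succ_succ q (k + i + 1) (k + j + 1),
        qbinom_succ_succ q (k + i + 1) k]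
      linear_combination h1 + q ^ (k + 1) * h2 + q ^ (k + j + 2) * h3 +
        qbinom q (k + i + 1) (k + j + 1) * qbinom_succ_succ q (k + j + 1) k
    · rw [qbinom_of_lt q (by omega : m + 1 < k + 1 + (j + 1))]
      rcases h.lt_or_eq with h | rfl
      · simp [qbinom_of_lt q (by omega : m + 1 < k + 1)]
      · simp [qbinom_of_lt]

lemma qbinom_mul_qPoch_mul_qbinom_sub_mul_qPoch (m : ℕ) {k s : ℕ} (hks : k ≤ s) :
    qbinom q m k * qPoch q q k * (qbinom q (m - k) (s - k) * qPoch q q (s - k)) =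
      qbinom q m s * qPoch q q s := by
  have h := qbinom_add_mul_qbinom q m k (s - k)
  rw [Nat.add_sub_cancel' hks] at h
  rw [← qbinom_mul_qPoch_mul_qPoch q hks]
  linear_combination -(qPoch q q k * qPoch q q (s - k)) * h

noncomputable def h2DTerm (q z1 z2 : ℂ) (m n j : ℕ) : ℂ :=
  qbinom q m j * qbinom q n j * q ^ ((m - j) * (n - j)) * (-1) ^ j * qPoch q q j *
    z1 ^ (m - j) * z2 ^ (n - j)

lemma h2D_eq_sum_h2DTerm (z1 z2 : ℂ) (m n : ℕ) :
    h2D q z1 z2 m n = ∑ j ∈ range (min m n + 1), h2DTerm q z1 z2 m n j := rfl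

lemma qbinom_mul_qbinom_mul_qPoch_mul_h2DTerm (z1 z2 : ℂ) (m n : ℕ) {k s : ℕ} (hks : k ≤ s) :
    qbinom q m k * qbinom q n k * qPoch q q k * q ^ k.choose 2 *
        h2DTerm q z1 z2 (m - k) (n - k) (s - k) =
      h2DTerm q z1 z2 m n s * (qbinom q s k * q ^ k.choose 2 * (-1) ^ k) := by
  have hm := qbinom_mul_qPoch_mul_qbinom_sub_mul_qPoch q m hks
  have hn := qbinom_add_mul_qbinom q n k (s - k)
  rw [Nat.add_sub_cancel' hks] at hn
  have hsign : (-1 : ℂ) ^ (s - k) = (-1) ^ s * (-1) ^ k := by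
    rw [← pow_sub_mul_pow (-1 : ℂ) hks, mul_assoc, ← mul_pow]
    norm_num
  simp only [h2DTerm, Nat.sub_sub_sub_cancel_right hks, hsign]
  linear_combination (qbinom q n k * qbinom q (n - k) (s - k) * q ^ k.choose 2 *
      q ^ ((m - s) * (n - s)) * (-1) ^ s * (-1) ^ k * z1 ^ (m - s) * z2 ^ (n - s)) * hm -
    (qbinom q m s * qPoch q q s * q ^ k.choose 2 *
      q ^ ((m - s) * (n - s)) * (-1) ^ s * (-1) ^ k * z1 ^ (m - s) * z2 ^ (n - s)) * hn

theorem stmt14 (m n : ℕ) (z1 z2 q : ℂ) (hq : q ≠ 0) :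
    z1 ^ m * z2 ^ n =
      (q ^ (m * n))⁻¹ *
        ∑ k ∈ Finset.range (min m n + 1),
          qbinom q m k * qbinom q n k * qPoch q q k * q ^ (k.choose 2) *
            h2D q z1 z2 (m - k) (n - k) := by
  rw [eq_inv_mul_iff_mul_eq₀ (pow_ne_zero _ hq), eq_comm]
  have expand (k : ℕ) (hk : k ∈ range (min m n + 1)) :
      qbinom q m k * qbinom q n k * qPoch q q k * q ^ k.choose 2 * h2D q z1 z2 (m - k) (n - k) =
        ∑ j ∈ range (min m n + 1 - k),
          qbinom q m k * qbinom q n k * qPoch q q k * q ^ k.choose 2 *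
            h2DTerm q z1 z2 (m - k) (n - k) j := by
    rw [h2D_eq_sum_h2DTerm, mul_sum, show min (m - k) (n - k) + 1 = min m n + 1 - k by
      rw [mem_range] at hk; omega]
  have regroup (s : ℕ) (_ : s ∈ range (min m n + 1)) :
      ∑ k ∈ range (s + 1), qbinom q m k * qbinom q n k * qPoch q q k * q ^ k.choose 2 *
          h2DTerm q z1 z2 (m - k) (n - k) (s - k) =
        h2DTerm q z1 z2 m n s * if s = 0 then 1 else 0 := by
    rw [← sum_qbinom_mul_pow_choose_mul_neg_one_pow q s, mul_sum]
    exact sum_congr rfl fun k hk =>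
      qbinom_mul_qbinom_mul_qPoch_mul_h2DTerm q z1 z2 m n (mem_range_succ_iff.1 hk)
  rw [sum_congr rfl expand, ← sum_range_diag_flip, sum_congr rfl regroup]
  simp [h2DTerm, qPoch]
  ring
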